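/- Let R be a zero-symmetric right near-ring, M a near-ring module over R, and P an R-ideal of M with RM ⊄ P. For each v ∈ {0,2,3,c}: if P is a v-classical prime R-ideal of M, then (P : M) = {r ∈ R : rM ⊆ P} is a v-classical prime ideal of R. -/
import Mathlib


open Pointwise

/-- A zero-symmetric right near-ring: `(R,+)` is a (not necessarily abelian) group,
`(R,·)` is a semigroup, right distributivity holds, and `r * 0 = 0`. -/
class NearRing (R : Type*) extends AddGroup R, Semigroup R where
  right_distrib : ∀ a b c : R, (a + b) * c = a * c + b * c
  mul_zero : ∀ a : R, a * 0 = 0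

/-- A (left) near-ring module over a right near-ring `R`. -/
class NearRingModule (R : Type*) [NearRing R] (M : Type*) [AddGroup M] extends
    SMul R M where
  add_smul : ∀ (r s : R) (m : M), (r + s) • m = r • m + s • m
  mul_smul : ∀ (r s : R) (m : M), (r * s) • m = r • s • m

/-- A subgroup of a (not necessarily abelian) additive group, as a set. -/
def IsSubgrp {G : Type*} [AddGroup G] (H : Set G) : Prop :=
  (0 : G) ∈ H ∧ (∀ x ∈ H, ∀ y ∈ H, x + y ∈ H) ∧ ∀ x ∈ H, -x ∈ H

/-- A normal subgroup of an additive group, as a set. -/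
def IsNormalSubgrp {G : Type*} [AddGroup G] (H : Set G) : Prop :=
  IsSubgrp H ∧ ∀ g : G, ∀ h ∈ H, g + h + -g ∈ H

/-- An `R`-submodule of a near-ring module `M`: a subgroup `N` with `RN ⊆ N`. -/
def IsRSubmodule (R : Type*) [NearRing R] {M : Type*} [AddGroup M]
    [NearRingModule R M] (N : Set M) : Prop :=
  IsSubgrp N ∧ ∀ r : R, ∀ n ∈ N, r • n ∈ N

/-- An `R`-ideal of a near-ring module `M`: a normal subgroup `P` with
`r • (m + p) - r • m ∈ P`. -/
def IsRIdeal (R : Type*) [NearRing R] {M : Type*} [AddGroup M]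
    [NearRingModule R M] (P : Set M) : Prop :=
  IsNormalSubgrp P ∧ ∀ (r : R) (m : M), ∀ p ∈ P, r • (m + p) - r • m ∈ P

/-- A (two-sided) ideal of the near-ring `R`. -/
def IsIdeal {R : Type*} [NearRing R] (I : Set R) : Prop :=
  IsNormalSubgrp I ∧ (∀ i ∈ I, ∀ r : R, i * r ∈ I) ∧
    ∀ r₁ r₂ : R, ∀ i ∈ I, r₁ * (r₂ + i) - r₁ * r₂ ∈ I

/-- A left `R`-subgroup of `R`: a subgroup `A` of `(R,+)` with `RA ⊆ A`. -/
def IsLeftRSubgroup {R : Type*} [NearRing R] (A : Set R) : Prop :=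
  IsSubgrp A ∧ ∀ r : R, ∀ a ∈ A, r * a ∈ A

/-- `P` satisfies the 0-classical prime condition: `ABN ⊆ P` implies `AN ⊆ P` or
`BN ⊆ P` for all ideals `A, B` of `R` and all `R`-submodules `N` of `M`. -/
def Classical0Prime (R : Type*) [NearRing R] {M : Type*} [AddGroup M]
    [NearRingModule R M] (P : Set M) : Prop :=
  ∀ (A B : Set R) (N : Set M), IsIdeal A → IsIdeal B → IsRSubmodule R N →
    (A * B) • N ⊆ P → A • N ⊆ P ∨ B • N ⊆ P

/-- `P` satisfies the 2-classical prime condition (with left `R`-subgroups `A, B`). -/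
def Classical2Prime (R : Type*) [NearRing R] {M : Type*} [AddGroup M]
    [NearRingModule R M] (P : Set M) : Prop :=
  ∀ (A B : Set R) (N : Set M), IsLeftRSubgroup A → IsLeftRSubgroup B →
    IsRSubmodule R N → (A * B) • N ⊆ P → A • N ⊆ P ∨ B • N ⊆ P

/-- `P` satisfies the 3-classical prime condition: `(aR)(bR)N ⊆ P` implies
`aN ⊆ P` or `bN ⊆ P`. -/
def Classical3Prime (R : Type*) [NearRing R] {M : Type*} [AddGroup M]
    [NearRingModule R M] (P : Set M) : Prop :=
  ∀ (a b : R) (N : Set M), IsRSubmodule R N →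
    ((({a} : Set R) * Set.univ) * (({b} : Set R) * Set.univ)) • N ⊆ P →
    a • N ⊆ P ∨ b • N ⊆ P

/-- `P` satisfies the c-classical prime condition: `(aRb)N ⊆ P` implies
`aN ⊆ P` or `bN ⊆ P`. -/
def ClassicalCPrime (R : Type*) [NearRing R] {M : Type*} [AddGroup M]
    [NearRingModule R M] (P : Set M) : Prop :=
  ∀ (a b : R) (N : Set M), IsRSubmodule R N →
    (({a} : Set R) * Set.univ * ({b} : Set R)) • N ⊆ P →
    a • N ⊆ P ∨ b • N ⊆ P

/-- `Q` is a 0-classical prime ideal of `R`: a proper ideal such that `ABI ⊆ Q`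
implies `AI ⊆ Q` or `BI ⊆ Q` for all ideals `A, B, I` of `R`. -/
def Classical0PrimeIdealR {R : Type*} [NearRing R] (Q : Set R) : Prop :=
  IsIdeal Q ∧ Q ≠ Set.univ ∧
    ∀ A B I : Set R, IsIdeal A → IsIdeal B → IsIdeal I →
      A * B * I ⊆ Q → A * I ⊆ Q ∨ B * I ⊆ Q

/-- `Q` is a 2-classical prime ideal of `R` (with left `R`-subgroups `A, B`). -/
def Classical2PrimeIdealR {R : Type*} [NearRing R] (Q : Set R) : Prop :=
  IsIdeal Q ∧ Q ≠ Set.univ ∧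
    ∀ A B I : Set R, IsLeftRSubgroup A → IsLeftRSubgroup B → IsIdeal I →
      A * B * I ⊆ Q → A * I ⊆ Q ∨ B * I ⊆ Q

/-- `Q` is a 3-classical prime ideal of `R`: `(aR)(bR)I ⊆ Q` implies `aI ⊆ Q` or
`bI ⊆ Q` for all `a, b ∈ R` and all ideals `I` of `R`. -/
def Classical3PrimeIdealR {R : Type*} [NearRing R] (Q : Set R) : Prop :=
  IsIdeal Q ∧ Q ≠ Set.univ ∧
    ∀ (a b : R) (I : Set R), IsIdeal I →
      (({a} : Set R) * Set.univ) * (({b} : Set R) * Set.univ) * I ⊆ Q →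
      ({a} : Set R) * I ⊆ Q ∨ ({b} : Set R) * I ⊆ Q

/-- `Q` is a c-classical prime ideal of `R`: `(aRb)I ⊆ Q` implies `aI ⊆ Q` or
`bI ⊆ Q` for all `a, b ∈ R` and all ideals `I` of `R`. -/
def ClassicalCPrimeIdealR {R : Type*} [NearRing R] (Q : Set R) : Prop :=
  IsIdeal Q ∧ Q ≠ Set.univ ∧
    ∀ (a b : R) (I : Set R), IsIdeal I →
      ({a} : Set R) * Set.univ * ({b} : Set R) * I ⊆ Q →
      ({a} : Set R) * I ⊆ Q ∨ ({b} : Set R) * I ⊆ Q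

section Helpers

variable {R M : Type*} [NearRing R] [AddGroup M] [NearRingModule R M]

lemma nr_zero_smul (m : M) : (0 : R) • m = 0 := by
  have h : (0 : R) • m = (0 : R) • m + (0 : R) • m := by
    conv_lhs => rw [← add_zero (0 : R), NearRingModule.add_smul]
  exact (left_eq_add.mp h)

lemma nr_neg_smul (r : R) (m : M) : (-r) • m = -(r • m) := by
  have h : (-r) • m + r • m = 0 := by
    rw [← NearRingModule.add_smul, neg_add_cancel, nr_zero_smul]
  exact eq_neg_of_add_eq_zero_left h

lemma nr_smul_zero (r : R) : r • (0 : M) = 0 := by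
  calc r • (0 : M) = r • ((0 : R) • (0 : M)) := by rw [nr_zero_smul]
    _ = (r * 0) • (0 : M) := (NearRingModule.mul_smul _ _ _).symm
    _ = (0 : R) • (0 : M) := by rw [NearRing.mul_zero]
    _ = 0 := nr_zero_smul _

lemma nr_sub_smul (x y : R) (m : M) : (x - y) • m = x • m - y • m := by
  rw [sub_eq_add_neg, sub_eq_add_neg, NearRingModule.add_smul, nr_neg_smul]

lemma nr_smul_mem {P : Set M} (hP : IsRIdeal R P) {p : M} (hp : p ∈ P) (r : R) :
    r • p ∈ P := by
  have h := hP.2 r 0 p hp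
  rwa [zero_add, nr_smul_zero, sub_zero] at h

lemma ann_isIdeal {P : Set M} (hP : IsRIdeal R P) (T : Set M)
    (hT : ∀ r : R, ∀ t ∈ T, r • t ∈ T) :
    IsIdeal {x : R | ∀ t ∈ T, x • t ∈ P} := by
  obtain ⟨⟨⟨h0, hadd, hneg⟩, hnorm⟩, hid⟩ := hP
  refine ⟨⟨⟨?_, ?_, ?_⟩, ?_⟩, ?_, ?_⟩
  · intro t _; rw [nr_zero_smul]; exact h0
  · intro x hx y hy t ht
    rw [NearRingModule.add_smul]
    exact hadd _ (hx t ht) _ (hy t ht)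
  · intro x hx t ht
    rw [nr_neg_smul]
    exact hneg _ (hx t ht)
  · intro g x hx t ht
    rw [NearRingModule.add_smul, NearRingModule.add_smul, nr_neg_smul]
    exact hnorm (g • t) _ (hx t ht)
  · intro x hx r t ht
    rw [NearRingModule.mul_smul]
    exact hx _ (hT r t ht)
  · intro r₁ r₂ x hx t ht
    rw [nr_sub_smul, NearRingModule.mul_smul, NearRingModule.mul_smul,
        NearRingModule.add_smul]
    exact hid r₁ (r₂ • t) _ (hx t ht)

lemma ann_isLeft {P : Set M} (hP : IsRIdeal R P) (T : Set M)
    (hT : ∀ r : R, ∀ t ∈ T, r • t ∈ T) :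
    IsLeftRSubgroup {x : R | ∀ t ∈ T, x • t ∈ P} := by
  refine ⟨(ann_isIdeal hP T hT).1.1, ?_⟩
  intro r x hx t ht
  rw [NearRingModule.mul_smul]
  exact nr_smul_mem hP (hx t ht) r

lemma univ_submodule : IsRSubmodule R (Set.univ : Set M) :=
  ⟨⟨trivial, fun _ _ _ _ => trivial, fun _ _ => trivial⟩, fun _ _ _ => trivial⟩

lemma mem_mul_left_ideal {I : Set R} (hI : IsIdeal I) (r : R) {i : R} (hi : i ∈ I) :
    r * i ∈ I := by
  have h := hI.2.2 r 0 i hi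
  rwa [zero_add, NearRing.mul_zero, sub_zero] at h

end Helpers

/-- if `P` is a `v`-classical prime `R`-ideal of `M` (`v ∈ {0,2,3,c}`,
with `RM ⊄ P`), then `(P : M) = {r ∈ R : rM ⊆ P}` is a `v`-classical prime ideal of `R`. -/
theorem stmt_1 {R M : Type*} [NearRing R] [AddGroup M] [NearRingModule R M]
    (P : Set M) (hP : IsRIdeal R P)
    (hRM : ¬ (Set.univ : Set R) • (Set.univ : Set M) ⊆ P) :
    (Classical0Prime R P → Classical0PrimeIdealR {r : R | ∀ m : M, r • m ∈ P}) ∧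
    (Classical2Prime R P → Classical2PrimeIdealR {r : R | ∀ m : M, r • m ∈ P}) ∧
    (Classical3Prime R P → Classical3PrimeIdealR {r : R | ∀ m : M, r • m ∈ P}) ∧
    (ClassicalCPrime R P → ClassicalCPrimeIdealR {r : R | ∀ m : M, r • m ∈ P}) := by
  -- Set Q := {r | ∀ m, r • m ∈ P}
  have hQset : {r : R | ∀ m : M, r • m ∈ P}
      = {x : R | ∀ t ∈ (Set.univ : Set M), x • t ∈ P} := by
    ext x; simp
  have hQideal : IsIdeal {r : R | ∀ m : M, r • m ∈ P} := by
    rw [hQset]; exact ann_isIdeal hP Set.univ (fun _ _ _ => trivial)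
  have hQne : {r : R | ∀ m : M, r • m ∈ P} ≠ Set.univ := by
    intro h
    apply hRM
    intro x hx
    rcases Set.mem_smul.mp hx with ⟨r, -, m, -, rfl⟩
    have hr : r ∈ {r : R | ∀ m : M, r • m ∈ P} := by rw [h]; trivial
    exact hr m
  refine ⟨?_, ?_, ?_, ?_⟩
  -- ===================== v = 0 =====================
  · intro h0
    refine ⟨hQideal, hQne, ?_⟩
    intro A B I hA hB hI hABI
    set T : Set M := {t : M | ∃ i ∈ I, ∃ m : M, i • m = t} with hTdef
    have hT : ∀ r : R, ∀ t ∈ T, r • t ∈ T := by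
      rintro r t ⟨i, hi, m, rfl⟩
      exact ⟨r * i, mem_mul_left_ideal hI r hi, m, NearRingModule.mul_smul r i m⟩
    set Φ : Set R := {x : R | ∀ t ∈ T, x • t ∈ P} with hΦdef
    have hΦ : IsIdeal Φ := ann_isIdeal hP T hT
    have hyp1 : (Φ * I) • (Set.univ : Set M) ⊆ P := by
      intro x hx
      rcases Set.mem_smul.mp hx with ⟨y, hy, m, -, rfl⟩
      rcases Set.mem_mul.mp hy with ⟨f, hf, i, hi, rfl⟩
      rw [NearRingModule.mul_smul]
      exact hf _ ⟨i, hi, m, rfl⟩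
    rcases h0 Φ I Set.univ hΦ hI univ_submodule hyp1 with hc | hc
    · -- Φ ⊆ Q, hence A*B ⊆ Q; apply primeness again with N = univ
      have hABΦ : A * B ⊆ Φ := by
        rintro x hx t ⟨i, hi, m, rfl⟩
        have hxI : x * i ∈ A * B * I := Set.mul_mem_mul hx hi
        have h2 := hABI hxI m
        rwa [NearRingModule.mul_smul] at h2
      have hABQ : (A * B) • (Set.univ : Set M) ⊆ P := by
        intro x hx
        rcases Set.mem_smul.mp hx with ⟨y, hy, m, -, rfl⟩
        exact hc (Set.smul_mem_smul (hABΦ hy) trivial)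
      rcases h0 A B Set.univ hA hB univ_submodule hABQ with h | h
      · left
        rintro x hx
        rcases Set.mem_mul.mp hx with ⟨a, ha, i, hi, rfl⟩
        intro m
        rw [NearRingModule.mul_smul]
        exact h (Set.smul_mem_smul ha trivial)
      · right
        rintro x hx
        rcases Set.mem_mul.mp hx with ⟨b, hb, i, hi, rfl⟩
        intro m
        rw [NearRingModule.mul_smul]
        exact h (Set.smul_mem_smul hb trivial)
    · -- I • M ⊆ P : both conclusions hold, pick the left one
      left
      rintro x hx
      rcases Set.mem_mul.mp hx with ⟨a, ha, i, hi, rfl⟩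
      intro m
      rw [NearRingModule.mul_smul]
      exact nr_smul_mem hP (hc (Set.smul_mem_smul hi (Set.mem_univ m))) a
  -- ===================== v = 2 =====================
  · intro h2'
    refine ⟨hQideal, hQne, ?_⟩
    intro A B I hA hB hI hABI
    set T : Set M := {t : M | ∃ i ∈ I, ∃ m : M, i • m = t} with hTdef
    have hT : ∀ r : R, ∀ t ∈ T, r • t ∈ T := by
      rintro r t ⟨i, hi, m, rfl⟩
      exact ⟨r * i, mem_mul_left_ideal hI r hi, m, NearRingModule.mul_smul r i m⟩
    set Φ : Set R := {x : R | ∀ t ∈ T, x • t ∈ P} with hΦdef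
    have hΦ : IsLeftRSubgroup Φ := ann_isLeft hP T hT
    have hIL : IsLeftRSubgroup I := ⟨hI.1.1, fun r i hi => mem_mul_left_ideal hI r hi⟩
    have hyp1 : (Φ * I) • (Set.univ : Set M) ⊆ P := by
      intro x hx
      rcases Set.mem_smul.mp hx with ⟨y, hy, m, -, rfl⟩
      rcases Set.mem_mul.mp hy with ⟨f, hf, i, hi, rfl⟩
      rw [NearRingModule.mul_smul]
      exact hf _ ⟨i, hi, m, rfl⟩
    rcases h2' Φ I Set.univ hΦ hIL univ_submodule hyp1 with hc | hc
    · have hABΦ : A * B ⊆ Φ := by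
        rintro x hx t ⟨i, hi, m, rfl⟩
        have hxI : x * i ∈ A * B * I := Set.mul_mem_mul hx hi
        have h2 := hABI hxI m
        rwa [NearRingModule.mul_smul] at h2
      have hABQ : (A * B) • (Set.univ : Set M) ⊆ P := by
        intro x hx
        rcases Set.mem_smul.mp hx with ⟨y, hy, m, -, rfl⟩
        exact hc (Set.smul_mem_smul (hABΦ hy) trivial)
      rcases h2' A B Set.univ hA hB univ_submodule hABQ with h | h
      · left
        rintro x hx
        rcases Set.mem_mul.mp hx with ⟨a, ha, i, hi, rfl⟩
        intro m
        rw [NearRingModule.mul_smul]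
        exact h (Set.smul_mem_smul ha trivial)
      · right
        rintro x hx
        rcases Set.mem_mul.mp hx with ⟨b, hb, i, hi, rfl⟩
        intro m
        rw [NearRingModule.mul_smul]
        exact h (Set.smul_mem_smul hb trivial)
    · left
      rintro x hx
      rcases Set.mem_mul.mp hx with ⟨a, ha, i, hi, rfl⟩
      intro m
      rw [NearRingModule.mul_smul]
      exact nr_smul_mem hP (hc (Set.smul_mem_smul hi (Set.mem_univ m))) a
  -- ===================== v = 3 =====================
  · intro h3
    refine ⟨hQideal, hQne, ?_⟩
    intro a b I hI habI
    have step1 : ∀ r₀ : R, ∀ i ∈ I,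
        ((a * r₀ * b) • (Set.univ : Set M) ⊆ P) ∨ (i • (Set.univ : Set M) ⊆ P) := by
      intro r₀ i hi
      apply h3 (a * r₀ * b) i Set.univ univ_submodule
      intro x hx
      rcases Set.mem_smul.mp hx with ⟨y, hy, m, -, rfl⟩
      rcases Set.mem_mul.mp hy with ⟨u, hu, v, hv, rfl⟩
      rcases Set.mem_mul.mp hu with ⟨u₁, hu₁, r, -, rfl⟩
      rcases Set.mem_mul.mp hv with ⟨v₁, hv₁, s, -, rfl⟩
      rw [Set.mem_singleton_iff] at hu₁ hv₁
      rw [hu₁, hv₁]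
      have hmem : (a * r₀ * b * r) * (i * s)
          ∈ (({a} : Set R) * Set.univ) * (({b} : Set R) * Set.univ) * I := by
        have h1 : (a * r₀) * (b * r)
            ∈ (({a} : Set R) * Set.univ) * (({b} : Set R) * Set.univ) :=
          Set.mul_mem_mul (Set.mul_mem_mul rfl (Set.mem_univ r₀))
            (Set.mul_mem_mul rfl (Set.mem_univ r))
        have h2 : i * s ∈ I := hI.2.1 i hi s
        have h3' := Set.mul_mem_mul h1 h2
        have he : ((a * r₀) * (b * r)) * (i * s) = (a * r₀ * b * r) * (i * s) := by
          rw [mul_assoc (a * r₀) b r]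
        rwa [he] at h3'
      exact habI hmem m
    by_cases hIQ : ∀ i ∈ I, ∀ m : M, i • m ∈ P
    · left
      rintro x hx
      rcases Set.mem_mul.mp hx with ⟨a', ha', i, hi, rfl⟩
      rw [Set.mem_singleton_iff] at ha'
      rw [ha']
      intro m
      rw [NearRingModule.mul_smul]
      exact nr_smul_mem hP (hIQ i hi m) a
    · push_neg at hIQ
      obtain ⟨i₀, hi₀, m₀, hm₀⟩ := hIQ
      have haRb : ∀ r₀ : R, ∀ m : M, (a * r₀ * b) • m ∈ P := by
        intro r₀ m
        rcases step1 r₀ i₀ hi₀ with h | h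
        · exact h (Set.smul_mem_smul_set (Set.mem_univ m))
        · exact absurd (h (Set.smul_mem_smul_set (Set.mem_univ m₀))) hm₀
      have hyp2 : ((({a} : Set R) * Set.univ) * (({b} : Set R) * Set.univ))
          • (Set.univ : Set M) ⊆ P := by
        intro x hx
        rcases Set.mem_smul.mp hx with ⟨y, hy, m, -, rfl⟩
        rcases Set.mem_mul.mp hy with ⟨u, hu, v, hv, rfl⟩
        rcases Set.mem_mul.mp hu with ⟨u₁, hu₁, r, -, rfl⟩
        rcases Set.mem_mul.mp hv with ⟨v₁, hv₁, s, -, rfl⟩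
        rw [Set.mem_singleton_iff] at hu₁ hv₁
        rw [hu₁, hv₁]
        have he : (a * r) * (b * s) = (a * r * b) * s := (mul_assoc (a * r) b s).symm
        rw [he, NearRingModule.mul_smul]
        exact haRb r (s • m)
      rcases h3 a b Set.univ univ_submodule hyp2 with h | h
      · left
        rintro x hx
        rcases Set.mem_mul.mp hx with ⟨a', ha', i, hi, rfl⟩
        rw [Set.mem_singleton_iff] at ha'
        rw [ha']
        intro m
        rw [NearRingModule.mul_smul]
        exact h (Set.smul_mem_smul_set (Set.mem_univ (i • m)))
      · right
        rintro x hx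
        rcases Set.mem_mul.mp hx with ⟨b', hb', i, hi, rfl⟩
        rw [Set.mem_singleton_iff] at hb'
        rw [hb']
        intro m
        rw [NearRingModule.mul_smul]
        exact h (Set.smul_mem_smul_set (Set.mem_univ (i • m)))
  -- ===================== v = c =====================
  · intro hc'
    refine ⟨hQideal, hQne, ?_⟩
    intro a b I hI habI
    have step1 : ∀ r₀ : R, ∀ i ∈ I,
        ((a * r₀ * b) • (Set.univ : Set M) ⊆ P) ∨ (i • (Set.univ : Set M) ⊆ P) := by
      intro r₀ i hi
      apply hc' (a * r₀ * b) i Set.univ univ_submodule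
      intro x hx
      rcases Set.mem_smul.mp hx with ⟨y, hy, m, -, rfl⟩
      rcases Set.mem_mul.mp hy with ⟨u, hu, v, hv, rfl⟩
      rcases Set.mem_mul.mp hu with ⟨u₁, hu₁, r, -, rfl⟩
      rw [Set.mem_singleton_iff] at hu₁ hv
      rw [hu₁, hv]
      have hmem : ((a * r₀ * b) * r) * i
          ∈ ({a} : Set R) * Set.univ * ({b} : Set R) * I := by
        have h1 : (a * r₀) * b ∈ ({a} : Set R) * Set.univ * ({b} : Set R) :=
          Set.mul_mem_mul (Set.mul_mem_mul rfl (Set.mem_univ r₀)) rfl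
        have h2 : r * i ∈ I := mem_mul_left_ideal hI r hi
        have h3' := Set.mul_mem_mul h1 h2
        have he : ((a * r₀) * b) * (r * i) = ((a * r₀ * b) * r) * i :=
          (mul_assoc (a * r₀ * b) r i).symm
        rwa [he] at h3'
      exact habI hmem m
    by_cases hIQ : ∀ i ∈ I, ∀ m : M, i • m ∈ P
    · left
      rintro x hx
      rcases Set.mem_mul.mp hx with ⟨a', ha', i, hi, rfl⟩
      rw [Set.mem_singleton_iff] at ha'
      rw [ha']
      intro m
      rw [NearRingModule.mul_smul]
      exact nr_smul_mem hP (hIQ i hi m) a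
    · push_neg at hIQ
      obtain ⟨i₀, hi₀, m₀, hm₀⟩ := hIQ
      have haRb : ∀ r₀ : R, ∀ m : M, (a * r₀ * b) • m ∈ P := by
        intro r₀ m
        rcases step1 r₀ i₀ hi₀ with h | h
        · exact h (Set.smul_mem_smul_set (Set.mem_univ m))
        · exact absurd (h (Set.smul_mem_smul_set (Set.mem_univ m₀))) hm₀
      have hyp2 : (({a} : Set R) * Set.univ * ({b} : Set R))
          • (Set.univ : Set M) ⊆ P := by
        intro x hx
        rcases Set.mem_smul.mp hx with ⟨y, hy, m, -, rfl⟩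
        rcases Set.mem_mul.mp hy with ⟨u, hu, v, hv, rfl⟩
        rcases Set.mem_mul.mp hu with ⟨u₁, hu₁, r, -, rfl⟩
        rw [Set.mem_singleton_iff] at hu₁ hv
        rw [hu₁, hv]
        exact haRb r m
      rcases hc' a b Set.univ univ_submodule hyp2 with h | h
      · left
        rintro x hx
        rcases Set.mem_mul.mp hx with ⟨a', ha', i, hi, rfl⟩
        rw [Set.mem_singleton_iff] at ha'
        rw [ha']
        intro m
        rw [NearRingModule.mul_smul]
        exact h (Set.smul_mem_smul_set (Set.mem_univ (i • m)))
      · right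
        rintro x hx
        rcases Set.mem_mul.mp hx with ⟨b', hb', i, hi, rfl⟩
        rw [Set.mem_singleton_iff] at hb'
        rw [hb']
        intro m
        rw [NearRingModule.mul_smul]
        exact h (Set.smul_mem_smul_set (Set.mem_univ (i • m)))
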